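/- Let A be a unital C*-algebra of real rank zero, let X and Y be unital Banach right A-modules, and let T : X → Y be a continuous linear map such that for every x ∈ X the value T(x) lies in the norm-closure of the set {Φ(x) : Φ ∈ Hom_A(X,Y)}. Then T ∈ Hom_A(X,Y); in particular, the space Hom_A(X,Y) is a reflexive subspace of B(X,Y). -/

import Mathlib

/-- A contractive Banach right module over a (possibly non-unital) C*-algebra `A`:
the action `(x, a) ↦ x·a` is a continuous bilinear map `X × A → X` satisfying
`(x·a)·b = x·(a*b)` and `‖x·a‖ ≤ ‖x‖·‖a‖`. -/
structure BanachRightModule (A X : Type*) [NonUnitalCStarAlgebra A]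
    [NormedAddCommGroup X] [NormedSpace ℂ X] where
  act : X →L[ℂ] A →L[ℂ] X
  act_mul : ∀ (x : X) (a b : A), act (act x a) b = act x (a * b)
  norm_act_le : ∀ (x : X) (a : A), ‖act x a‖ ≤ ‖x‖ * ‖a‖

section Defs

variable {A X Y : Type*} [NonUnitalCStarAlgebra A]
  [NormedAddCommGroup X] [NormedSpace ℂ X]
  [NormedAddCommGroup Y] [NormedSpace ℂ Y]

/-- A projection in a C*-algebra: a self-adjoint idempotent. -/
def IsProjection {A : Type*} [NonUnitalCStarAlgebra A] (e : A) : Prop :=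
  IsSelfAdjoint e ∧ IsIdempotentElem e

/-- The operator `aTb : x ↦ T(x·a)·b`. -/
noncomputable def sandwich (ρX : BanachRightModule A X) (ρY : BanachRightModule A Y)
    (T : X →L[ℂ] Y) (a b : A) : X →L[ℂ] Y :=
  ((ρY.act.flip b).comp T).comp (ρX.act.flip a)

/-- The set of continuous right `A`-module homomorphisms from `X` to `Y`. -/
def homSet (ρX : BanachRightModule A X) (ρY : BanachRightModule A Y) :
    Set (X →L[ℂ] Y) :=
  {Φ | ∀ (x : X) (a : A), Φ (ρX.act x a) = ρY.act (Φ x) a}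

/-- `β(T) = sup{‖eTf‖ : e, f ∈ A projections with ef = 0}`. -/
noncomputable def betaConst (ρX : BanachRightModule A X) (ρY : BanachRightModule A Y)
    (T : X →L[ℂ] Y) : ℝ :=
  sSup {r : ℝ | ∃ e f : A, IsProjection e ∧ IsProjection f ∧ e * f = 0 ∧
    r = ‖sandwich ρX ρY T e f‖}

/-- `γ(T) = sup{‖aTb‖ : a, b ∈ A positive contractions with ab = 0}`. -/
noncomputable def gammaConst [PartialOrder A] [StarOrderedRing A]
    (ρX : BanachRightModule A X) (ρY : BanachRightModule A Y)
    (T : X →L[ℂ] Y) : ℝ :=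
  sSup {r : ℝ | ∃ a b : A, 0 ≤ a ∧ 0 ≤ b ∧ ‖a‖ ≤ 1 ∧ ‖b‖ ≤ 1 ∧ a * b = 0 ∧
    r = ‖sandwich ρX ρY T a b‖}

/-- `δ(T) = sup_{‖x‖ ≤ 1} inf{‖T(x) − Φ(x)‖ : Φ ∈ Hom_A(X,Y)}`. -/
noncomputable def deltaConst (ρX : BanachRightModule A X) (ρY : BanachRightModule A Y)
    (T : X →L[ℂ] Y) : ℝ :=
  sSup {r : ℝ | ∃ x : X, ‖x‖ ≤ 1 ∧
    r = Metric.infDist (T x) ((fun Φ : X →L[ℂ] Y => Φ x) '' homSet ρX ρY)}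

/-- `‖ad(T)‖ = sup{‖aT − Ta‖ : a ∈ A, ‖a‖ ≤ 1}`, where `(aT)(x) = T(x·a)` and
`(Ta)(x) = T(x)·a`. -/
noncomputable def adNorm (ρX : BanachRightModule A X) (ρY : BanachRightModule A Y)
    (T : X →L[ℂ] Y) : ℝ :=
  sSup {r : ℝ | ∃ a : A, ‖a‖ ≤ 1 ∧
    r = ‖T.comp (ρX.act.flip a) - (ρY.act.flip a).comp T‖}

/-- The module `X` is essential: the linear span of `{x·a : x ∈ X, a ∈ A}` is dense. -/
def Essential (ρX : BanachRightModule A X) : Prop :=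
  Dense (Submodule.span ℂ {z : X | ∃ (x : X) (a : A), z = ρX.act x a} : Set X)

end Defs

/-!
If `ab = 0` then every module map `Φ` satisfies `Φ(x·a)·b = Φ(x)·ab = 0`, and this identity
passes to the pointwise limit `T`. For a projection `e`, applying it to the pairs `(e, 1 - e)` and
`(1 - e, e)` gives `T(x·e) = T(x)·e`. The elements `a` with `T(x·a) = T(x)·a` for all `x` form a
closed subspace of `A`; it contains the projections, hence all self-adjoint elements with finite
spectrum (these are linear combinations of their spectral projections), hence by real rank zero all
self-adjoint elements, hence all of `A`.
-/

def HasRealRankZero (A : Type*) [CStarAlgebra A] : Prop :=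
  ∀ a : A, IsSelfAdjoint a → a ∈ closure {b : A | IsSelfAdjoint b ∧ (spectrum ℂ b).Finite}

section SpectralDecomposition

variable {A : Type*} [Ring A] [StarRing A] [TopologicalSpace A] [Algebra ℝ A]
  [ContinuousFunctionalCalculus ℝ A IsSelfAdjoint]

theorem isStarProjection_cfc_indicator_singleton {a : A} (hfin : (spectrum ℝ a).Finite)
    (t : ℝ) :
    IsStarProjection (cfc (({t} : Set ℝ).indicator 1) a) := by
  refine ⟨?_, cfc_predicate _ a⟩
  have hsq : ({t} : Set ℝ).indicator 1 * ({t} : Set ℝ).indicator 1 =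
      ({t} : Set ℝ).indicator (1 : ℝ → ℝ) := by
    funext x
    by_cases hx : x = t <;> simp [hx]
  rw [IsIdempotentElem, ← cfc_mul _ _ a (hfin.continuousOn _) (hfin.continuousOn _)]
  exact congrArg (cfc · a) hsq

theorem IsSelfAdjoint.mem_span_isStarProjection {a : A} (ha : IsSelfAdjoint a)
    (hfin : (spectrum ℝ a).Finite) : a ∈ Submodule.span ℝ {e : A | IsStarProjection e} := by
  classical
  have hid : (spectrum ℝ a).EqOn id
      (∑ t ∈ hfin.toFinset, fun x => t * ({t} : Set ℝ).indicator 1 x) := by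
    intro x hx
    rw [Finset.sum_apply, Finset.sum_eq_single_of_mem x (hfin.mem_toFinset.mpr hx)]
    · simp
    · intro t _ hne
      simp [Ne.symm hne]
  have hdecomp : a = ∑ t ∈ hfin.toFinset, t • cfc (({t} : Set ℝ).indicator 1) a := by
    conv_lhs => rw [← cfc_id ℝ a ha, cfc_congr hid,
      cfc_sum _ a _ fun _ _ => hfin.continuousOn _]
    exact Finset.sum_congr rfl fun t _ => cfc_const_mul t _ a (hfin.continuousOn _)
  rw [hdecomp]
  exact sum_mem fun t _ => Submodule.smul_mem _ t <|
    Submodule.subset_span (isStarProjection_cfc_indicator_singleton hfin t)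

end SpectralDecomposition

theorem Submodule.eq_top_of_isClosed_of_isStarProjection_mem {A : Type*} [CStarAlgebra A]
    (hA : HasRealRankZero A) {S : Submodule ℂ A} (hS : IsClosed (S : Set A))
    (hproj : ∀ e : A, IsStarProjection e → e ∈ S) : S = ⊤ := by
  have hfinite : ∀ b : A, IsSelfAdjoint b → (spectrum ℂ b).Finite → b ∈ S := by
    intro b hb hbC
    have hbR : (spectrum ℝ b).Finite := by
      rw [← spectrum.preimage_algebraMap ℂ]
      exact hbC.preimage (algebraMap ℝ ℂ).injective.injOn
    exact (Submodule.span_le (p := S.restrictScalars ℝ)).mpr hproj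
      (hb.mem_span_isStarProjection hbR)
  have hsa : ∀ a : A, IsSelfAdjoint a → a ∈ S := fun a ha =>
    hS.closure_subset_iff.mpr (fun b hb => hfinite b hb.1 hb.2) (hA a ha)
  refine Submodule.eq_top_iff'.mpr fun a => ?_
  rw [← realPart_add_I_smul_imaginaryPart a]
  exact add_mem (hsa _ (realPart a).2) (Submodule.smul_mem _ _ (hsa _ (imaginaryPart a).2))

section Intertwining

variable {X Y : Type*} [NormedAddCommGroup X] [NormedSpace ℂ X]
  [NormedAddCommGroup Y] [NormedSpace ℂ Y]

section NonUnital

variable {A : Type*} [NonUnitalCStarAlgebra A]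
  (ρX : BanachRightModule A X) (ρY : BanachRightModule A Y) (T : X →L[ℂ] Y)

def intertwiningSubmodule : Submodule ℂ A where
  carrier := {a | ∀ x, T (ρX.act x a) = ρY.act (T x) a}
  add_mem' {a b} ha hb x := by simp only [map_add, ha x, hb x]
  zero_mem' x := by simp
  smul_mem' c a ha x := by simp only [map_smul, ha x]

theorem isClosed_intertwiningSubmodule :
    IsClosed (intertwiningSubmodule ρX ρY T : Set A) := by
  show IsClosed {a | ∀ x, T (ρX.act x a) = ρY.act (T x) a}
  rw [Set.ofPred_forall]
  exact isClosed_iInter fun x =>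
    isClosed_eq (T.continuous.comp (ρX.act x).continuous) (ρY.act (T x)).continuous

variable {ρX ρY T}

theorem act_apply_act_eq_zero_of_mul_eq_zero
    (hT : ∀ x, T x ∈ closure ((fun Φ : X →L[ℂ] Y => Φ x) '' homSet ρX ρY))
    {a b : A} (hab : a * b = 0) (x : X) : ρY.act (T (ρX.act x a)) b = 0 := by
  have hclosed : IsClosed {y : Y | ρY.act y b = 0} :=
    isClosed_eq (ρY.act.flip b).continuous continuous_const
  refine closure_minimal ?_ hclosed (hT (ρX.act x a))
  rintro _ ⟨Φ, hΦ, rfl⟩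
  simp [hΦ x a, ρY.act_mul, hab]

end NonUnital

theorem IsIdempotentElem.mem_intertwiningSubmodule {A : Type*} [CStarAlgebra A]
    {ρX : BanachRightModule A X} {ρY : BanachRightModule A Y} {T : X →L[ℂ] Y}
    (hX1 : ∀ x : X, ρX.act x 1 = x) (hY1 : ∀ y : Y, ρY.act y 1 = y)
    (hT : ∀ a b : A, a * b = 0 → ∀ x, ρY.act (T (ρX.act x a)) b = 0)
    {e : A} (he : IsIdempotentElem e) : e ∈ intertwiningSubmodule ρX ρY T := by
  intro x
  have h₁ := hT e (1 - e) (by rw [mul_sub, mul_one, he.eq, sub_self]) x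
  have h₂ := hT (1 - e) e (by rw [sub_mul, one_mul, he.eq, sub_self]) x
  rw [map_sub, hY1, sub_eq_zero] at h₁
  rw [map_sub, hX1, map_sub, map_sub, sub_apply, sub_eq_zero] at h₂
  exact h₁.trans h₂.symm

end Intertwining

theorem stmt19_general {A X Y : Type*} [CStarAlgebra A]
    [NormedAddCommGroup X] [NormedSpace ℂ X]
    [NormedAddCommGroup Y] [NormedSpace ℂ Y]
    (hRR0 : ∀ a : A, IsSelfAdjoint a →
      a ∈ closure {b : A | IsSelfAdjoint b ∧ (spectrum ℂ b).Finite})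
    (ρX : BanachRightModule A X) (ρY : BanachRightModule A Y)
    (hX1 : ∀ x : X, ρX.act x 1 = x) (hY1 : ∀ y : Y, ρY.act y 1 = y)
    (T : X →L[ℂ] Y)
    (h : ∀ x : X, T x ∈ closure ((fun Φ : X →L[ℂ] Y => Φ x) '' homSet ρX ρY)) :
    T ∈ homSet ρX ρY := by
  have htop : intertwiningSubmodule ρX ρY T = ⊤ :=
    Submodule.eq_top_of_isClosed_of_isStarProjection_mem hRR0
      (isClosed_intertwiningSubmodule ρX ρY T) fun e he =>
        he.isIdempotentElem.mem_intertwiningSubmodule hX1 hY1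
          fun _ _ hab => act_apply_act_eq_zero_of_mul_eq_zero h hab
  exact fun x a => Submodule.eq_top_iff'.mp htop a x

/-- Let `A` be a unital C*-algebra of real rank zero, `X` and `Y`
unital Banach right `A`-modules, and let `T : X → Y` be a continuous linear map
such that `T(x)` lies in the norm-closure of `{Φ(x) : Φ ∈ Hom_A(X,Y)}` for every
`x`.  Then `T ∈ Hom_A(X,Y)`; in particular, `Hom_A(X,Y)` is a reflexive subspace
of `B(X,Y)`. -/
theorem stmt19 {A X Y : Type*} [CStarAlgebra A]
    [NormedAddCommGroup X] [NormedSpace ℂ X] [CompleteSpace X]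
    [NormedAddCommGroup Y] [NormedSpace ℂ Y] [CompleteSpace Y]
    (hRR0 : ∀ a : A, IsSelfAdjoint a →
      a ∈ closure {b : A | IsSelfAdjoint b ∧ (spectrum ℂ b).Finite})
    (ρX : BanachRightModule A X) (ρY : BanachRightModule A Y)
    (hX1 : ∀ x : X, ρX.act x 1 = x) (hY1 : ∀ y : Y, ρY.act y 1 = y)
    (T : X →L[ℂ] Y)
    (h : ∀ x : X, T x ∈ closure ((fun Φ : X →L[ℂ] Y => Φ x) '' homSet ρX ρY)) :
    T ∈ homSet ρX ρY :=
  stmt19_general hRR0 ρX ρY hX1 hY1 T h
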